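/- Let N be a network on X with |X| ≥ 2, let x ∈ X, and let N−x be the network obtained from N by deleting x and its incident edge and suppressing the resulting degree-2 vertex. If N−x is tree-based, then N is tree-based. -/

import Mathlib

open SimpleGraph

/-- Degree of a vertex (as the cardinality of its neighbour set). -/
noncomputable def deg {W : Type*} (G : SimpleGraph W) (v : W) : ℕ :=
  (G.neighborSet v).ncard

/-- `T` is a support-tree for `G` with leaf set `X`: a spanning tree of `G`
whose leaves (vertices of degree at most 1) are exactly `X`. -/
def IsSupportTree {W : Type*} (G T : SimpleGraph W) (X : Set W) : Prop :=
  T ≤ G ∧ T.IsTree ∧ {v | deg T v ≤ 1} = X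

/-- A graph is tree-based on `X` if it has a support-tree with leaf set `X`. -/
def TreeBased {W : Type*} (G : SimpleGraph W) (X : Set W) : Prop :=
  ∃ T, IsSupportTree G T X

/-- An unrooted phylogenetic network on `X`: a connected graph all of whose
vertices have degree 1 or 3 (allowing the single-vertex convention via `≤ 1`),
whose leaves are exactly `X`. -/
def IsNetwork {W : Type*} (G : SimpleGraph W) (X : Set W) : Prop :=
  G.Connected ∧ (∀ v, deg G v ≤ 1 ∨ deg G v = 3) ∧ {v | deg G v ≤ 1} = X

/-- The cut-edge `{u,v}` induces a split of `X`: each side of the deleted edge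
contains an element of `X`. -/
def InducesSplit {W : Type*} (G : SimpleGraph W) (X : Set W) (u v : W) : Prop :=
  (∃ a ∈ X, (G.deleteEdges {s(u, v)}).Reachable u a) ∧
    ∃ b ∈ X, (G.deleteEdges {s(u, v)}).Reachable v b

/-- A network is proper if every cut-edge induces a split of `X`. -/
def ProperNet {W : Type*} (G : SimpleGraph W) (X : Set W) : Prop :=
  ∀ u v : W, (s(u, v) ∈ G.edgeSet ∧ G.IsBridge s(u, v)) → InducesSplit G X u v

/-- A network is simple if every cut-edge is trivial, i.e. has a leaf endpoint. -/
def SimpleNet {W : Type*} (G : SimpleGraph W) (X : Set W) : Prop :=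
  ∀ u v : W, (s(u, v) ∈ G.edgeSet ∧ G.IsBridge s(u, v)) → u ∈ X ∨ v ∈ X

/-- A graph is bridgeless if it has no cut-edge. -/
def Bridgeless {W : Type*} (H : SimpleGraph W) : Prop :=
  ∀ e, ¬ (e ∈ H.edgeSet ∧ H.IsBridge e)

/-- A blob of `G`: a maximal connected subgraph without a cut-edge that is not
a single vertex. -/
def IsBlob {W : Type*} (G : SimpleGraph W) (B : G.Subgraph) : Prop :=
  B.verts.Nontrivial ∧ B.Connected ∧ Bridgeless B.coe ∧
    ∀ B' : G.Subgraph, B'.verts.Nontrivial → B'.Connected → Bridgeless B'.coe →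
      B ≤ B' → B = B'

/-- The simple network `B_N` associated to a blob `B`: the union of `B` with
all cut-edges of `G` incident to `B`. -/
def blobNet {W : Type*} (G : SimpleGraph W) (B : G.Subgraph) : G.Subgraph where
  verts := B.verts ∪ {w | ∃ u ∈ B.verts, s(u, w) ∈ G.edgeSet ∧ G.IsBridge s(u, w)}
  Adj a b := B.Adj a b ∨ ((s(a, b) ∈ G.edgeSet ∧ G.IsBridge s(a, b)) ∧ (a ∈ B.verts ∨ b ∈ B.verts))
  adj_sub := by
    rintro v w (h | ⟨h, -⟩)
    · exact B.adj_sub h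
    · exact (SimpleGraph.mem_edgeSet G).mp h.1
  edge_vert := by
    rintro v w (h | ⟨h, hv | hw⟩)
    · exact Or.inl (B.edge_vert h)
    · exact Or.inl hv
    · exact Or.inr ⟨w, hw, by rwa [Sym2.eq_swap]⟩
  symm := by
    constructor
    rintro v w (h | ⟨h, hc⟩)
    · exact Or.inl (B.adj_symm h)
    · exact Or.inr ⟨by rwa [Sym2.eq_swap], hc.symm⟩

/-- The leaf set of `B_N`: endpoints of incident cut-edges not lying in `B`. -/
def blobNetLeaves {W : Type*} (G : SimpleGraph W) (B : G.Subgraph) :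
    Set (blobNet G B).verts :=
  {w | (w : W) ∉ B.verts}

/-- `G` is a level-`k` network: at most `k` edges must be removed from each
blob to obtain a tree. -/
def Level {W : Type*} (G : SimpleGraph W) (k : ℕ) : Prop :=
  ∀ B : G.Subgraph, IsBlob G B → B.edgeSet.ncard ≤ B.verts.ncard - 1 + k
/-- The network `N − x`: delete leaf `x` and its incident edge and suppress the
resulting degree-2 vertex `v` (the former neighbour of `x`). -/
def suppressAdj {V : Type*} (G : SimpleGraph V) (x v : V) :
    SimpleGraph {w : V // w ≠ x ∧ w ≠ v} where
  Adj a b := a ≠ b ∧ (G.Adj a b ∨ (G.Adj v a ∧ G.Adj v b))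
  symm := by
    constructor
    rintro a b ⟨h1, h2 | ⟨h3, h4⟩⟩
    · exact ⟨h1.symm, Or.inl h2.symm⟩
    · exact ⟨h1.symm, Or.inr ⟨h4, h3⟩⟩
  loopless := by constructor; rintro a ⟨h1, -⟩; exact h1 rfl

/-- The network `C_e(x,y)`: replace the edge `e = {u,v}` of `C` by a path
`u – w₁ – w₂ – v` and attach pendant leaves `x = Sum.inr 2` to `w₁ = Sum.inr 0`
and `y = Sum.inr 3` to `w₂ = Sum.inr 1`. -/
def extGraph {W : Type*} (C : SimpleGraph W) (u v : W) : SimpleGraph (W ⊕ Fin 4) :=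
  SimpleGraph.fromEdgeSet
    ((Sym2.map Sum.inl) '' (C.edgeSet \ {s(u, v)}) ∪
      {s(Sum.inl u, Sum.inr 0), s(Sum.inr 0, Sum.inr 1), s(Sum.inr 1, Sum.inl v),
       s(Sum.inr 0, Sum.inr 2), s(Sum.inr 1, Sum.inr 3)})

/-- The leaves `x` and `y` of `C_e(x,y)`. -/
def extLeaves (W : Type*) : Set (W ⊕ Fin 4) := {Sum.inr 2, Sum.inr 3}

/-- The Petersen graph, realized as the Kneser graph K(5,2). -/
def petersen : SimpleGraph {s : Finset (Fin 5) // s.card = 2} where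
  Adj a b := Disjoint (a : Finset (Fin 5)) (b : Finset (Fin 5))
  symm := ⟨fun a b h => h.symm⟩
  loopless := ⟨fun a h => by
    have h2 : (a : Finset (Fin 5)) = ∅ := by
      simpa using disjoint_self.mp h
    have := a.2
    rw [h2] at this
    simp at this⟩

/-- `D` is an orientation of the edges of `G`. -/
def IsOrientation {V : Type*} (G : SimpleGraph V) (D : V → V → Prop) : Prop :=
  (∀ u v, G.Adj u v ↔ (D u v ∨ D v u)) ∧ ∀ u v, ¬ (D u v ∧ D v u)

noncomputable def outdeg {α : Type*} (r : α → α → Prop) (v : α) : ℕ := {w | r v w}.ncard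
noncomputable def indeg {α : Type*} (r : α → α → Prop) (v : α) : ℕ := {w | r w v}.ncard

/-- A rooted (binary) phylogenetic network with root `ρ` and leaf set `Y`:
a DAG with a unique root of indegree 0 and outdegree 2, leaves (outdegree 0,
indegree 1) exactly `Y`, and all non-root vertices of total degree 1 or 3. -/
def IsRootedNetwork {α : Type*} (r : α → α → Prop) (ρ : α) (Y : Set α) : Prop :=
  (∀ v, ¬ Relation.TransGen r v v) ∧
  indeg r ρ = 0 ∧ outdeg r ρ = 2 ∧
  (∀ v, indeg r v = 0 → v = ρ) ∧
  (∀ v, v ≠ ρ → indeg r v + outdeg r v = 1 ∨ indeg r v + outdeg r v = 3) ∧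
  {v | outdeg r v = 0} = Y ∧ (∀ v ∈ Y, indeg r v = 1)

/-- A rooted network is tree-based if it contains a spanning arborescence
rooted at `ρ` whose leaf set is `Y`. -/
def RootedTreeBased {α : Type*} (r : α → α → Prop) (ρ : α) (Y : Set α) : Prop :=
  ∃ t : α → α → Prop, (∀ a b, t a b → r a b) ∧
    (∀ v, Relation.ReflTransGen t ρ v) ∧
    (∀ v, v ≠ ρ → indeg t v = 1) ∧ indeg t ρ = 0 ∧
    {v | outdeg t v = 0} = Y

/-- `T` is obtained from `T'` by suppressing all degree-2 vertices, via the
embedding `f` of the vertices of `T` into those of `T'`. -/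
def Suppresses {A B : Type*} (T' : SimpleGraph A) (T : SimpleGraph B) (f : B → A) : Prop :=
  Function.Injective f ∧
  (∀ a : A, deg T' a ≠ 2 → a ∈ Set.range f) ∧
  (∀ b : B, deg T' (f b) ≠ 2) ∧
  ∀ b b' : B, T.Adj b b' ↔
    ∃ p : T'.Walk (f b) (f b'), p.IsPath ∧
      ∀ a ∈ p.support, a ≠ f b → a ≠ f b' → deg T' a = 2

/-- `G` is fully tree-based on `X`: every subtree of `G` whose leaf set is `X`
is spanning (hence a support-tree). -/
def FullyTreeBased {W : Type*} (G : SimpleGraph W) (X : Set W) : Prop :=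
  ∀ H : G.Subgraph, H.Connected → H.coe.IsAcyclic →
    {v | v ∈ H.verts ∧ (H.neighborSet v).ncard ≤ 1} = X → H.IsSpanning

/-!
The neighbour `v` of `x` has degree 3, since `N − x` is nonempty; let `a, b` be its other
neighbours, so that `N − x` is `N` minus `x, v` plus the edge `ab`. A support tree `T'` of
`N − x` either uses only edges of `N`, and then attaching the path `a – v – x` gives a support
tree of `N`, or it uses the new edge `ab`, which is then subdivided by `v` with `x` hung from `v`.
Either way the result is a tree by counting edges, and outside `x` and `v` no degree drops, so
the leaves are exactly `X`.
-/

lemma deg_mono {V : Type*} [Finite V] {G H : SimpleGraph V} (h : G ≤ H) (w : V) :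
    deg G w ≤ deg H w :=
  Set.ncard_le_ncard fun _ hq => h hq

lemma deg_map {V W : Type*} (f : V ↪ W) (G : SimpleGraph V) (w : V) :
    deg (G.map f) (f w) = deg G w := by
  rw [deg, neighborSet_map, Set.ncard_image_of_injective _ f.injective, deg]

lemma two_le_deg {V : Type*} [Finite V] {G : SimpleGraph V} {w p q : V} (hp : G.Adj w p)
    (hq : G.Adj w q) (hpq : p ≠ q) : 2 ≤ deg G w := by
  rw [deg, ← Set.ncard_pair hpq]
  exact Set.ncard_le_ncard (Set.insert_subset hp (Set.singleton_subset_iff.2 hq))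

lemma deg_le_deg_subdivide {V : Type*} [Finite V] {H : SimpleGraph V} {a b v : V}
    (hv : ∀ q, ¬H.Adj v q) (w : V) :
    deg H w ≤ deg (H.deleteEdges {s(a, b)} ⊔ edge v a ⊔ edge v b) w := by
  classical
  -- an endpoint of `ab` trades its neighbour across `ab` for `v`
  refine Set.ncard_le_ncard_of_injOn (fun q => if s(w, q) = s(a, b) then v else q)
    (fun q hq => ?_) fun q₁ hq₁ q₂ hq₂ h => ?_
  · have hwv : w ≠ v := fun h => hv q (h ▸ hq)
    split_ifs with hab
    · rcases Sym2.eq_iff.1 hab with ⟨rfl, -⟩ | ⟨rfl, -⟩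
      · exact Or.inl (Or.inr (by simp [edge_adj, hwv]))
      · exact Or.inr (by simp [edge_adj, hwv])
    · exact Or.inl (Or.inl (deleteEdges_adj.2 ⟨hq, hab⟩))
  · have hv₁ : q₁ ≠ v := fun h => hv w (h ▸ hq₁.symm)
    have hv₂ : q₂ ≠ v := fun h => hv w (h ▸ hq₂.symm)
    dsimp only at h
    split_ifs at h with h₁ h₂ h₂
    · exact Sym2.congr_right.1 (h₁.trans h₂.symm)
    · exact absurd h.symm hv₂
    · exact absurd h hv₁
    · exact h

namespace SimpleGraph

variable {V : Type*}

lemma ncard_edgeSet_map {W : Type*} (f : V ↪ W) (G : SimpleGraph V) :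
    (G.map f).edgeSet.ncard = G.edgeSet.ncard := by
  rw [edgeSet_map, Set.ncard_image_of_injective _ f.sym2Map.injective]

lemma Reachable.lift {W : Type*} {G : SimpleGraph V} {H : SimpleGraph W} (f : V → W)
    (hf : ∀ ⦃p q⦄, G.Adj p q → H.Reachable (f p) (f q)) {p q : V} (h : G.Reachable p q) :
    H.Reachable (f p) (f q) := by
  rw [reachable_iff_reflTransGen] at h ⊢
  exact h.lift' f fun p q hpq => (reachable_iff_reflTransGen _ _).1 (hf hpq)

lemma Reachable.mem_of_forall_adj_mem {G : SimpleGraph V} {s : Set V}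
    (hs : ∀ ⦃p q⦄, G.Adj p q → p ∈ s → q ∈ s) {p q : V} (h : G.Reachable p q) (hp : p ∈ s) :
    q ∈ s := by
  rw [reachable_iff_reflTransGen] at h
  induction h with
  | refl => exact hp
  | tail _ hqr ih => exact hs hqr ih

lemma adj_of_le_sup_edge_of_not_le {G H : SimpleGraph V} {a b : V} (h : H ≤ G ⊔ edge a b)
    (hG : ¬H ≤ G) : H.Adj a b := by
  by_contra hab
  refine hG fun p q hpq => (h hpq).resolve_right fun he => ?_
  rcases ((edge_adj _ _ _ _).1 he).1 with ⟨rfl, rfl⟩ | ⟨rfl, rfl⟩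
  · exact hab hpq
  · exact hab hpq.symm

section Complement

variable {x v : V} {T' : SimpleGraph {w : V // w ≠ x ∧ w ≠ v}}

lemma natCard_subtype_ne_and_ne_add_two [Finite V] (hxv : x ≠ v) :
    Nat.card {w : V // w ≠ x ∧ w ≠ v} + 2 = Nat.card V := by
  have hcompl : {w : V | w ≠ x ∧ w ≠ v} = {x, v}ᶜ := by ext; simp
  rw [← Set.ncard_pair hxv, add_comm, ← Set.ncard_add_ncard_compl {x, v}, ← hcompl]
  rfl

lemma ne_and_ne_of_adj_map_subtype {p q : V}
    (h : (T'.map (Function.Embedding.subtype _)).Adj p q) : p ≠ x ∧ p ≠ v := by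
  obtain ⟨p', -, -, rfl, -⟩ := (map_adj _ _ _ _).1 h
  exact p'.2

lemma mk_notMem_edgeSet_map_subtype {p q : V} (hp : p = x ∨ p = v) :
    s(p, q) ∉ (T'.map (Function.Embedding.subtype _)).edgeSet := fun h => by
  have := ne_and_ne_of_adj_map_subtype h
  tauto

lemma connected_of_reachable_subtype {T : SimpleGraph V} (hT' : T'.Preconnected)
    (hlift : ∀ ⦃p q⦄, T'.Adj p q → T.Reachable p q) (a : {w : V // w ≠ x ∧ w ≠ v})
    (hva : T.Adj v a) (hxv : T.Adj x v) : T.Connected := by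
  refine (connected_iff_exists_forall_reachable T).2 ⟨a, fun w => ?_⟩
  by_cases hw : w ≠ x ∧ w ≠ v
  · exact (hT' a ⟨w, hw⟩).lift Subtype.val hlift
  · obtain rfl | rfl : w = x ∨ w = v := by tauto
    · exact hva.reachable.symm.trans hxv.reachable.symm
    · exact hva.reachable.symm

theorem IsTree.map_sup_edge_sup_edge [Finite V] (hT' : T'.IsTree) (hxv : x ≠ v)
    (a : {w : V // w ≠ x ∧ w ≠ v}) :
    (T'.map (Function.Embedding.subtype _) ⊔ edge v a ⊔ edge x v).IsTree := by
  rw [isTree_iff_connected_and_card] at hT' ⊢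
  obtain ⟨hconn, hcard⟩ := hT'
  refine ⟨connected_of_reachable_subtype hconn.preconnected
      (fun _ _ h => Adj.reachable (.inl (.inl (map_adj_apply.2 h))))
      a (Or.inl (Or.inr (by simp [edge_adj, a.2.2.symm]))) (Or.inr (by simp [edge_adj, hxv])), ?_⟩
  rw [← natCard_subtype_ne_and_ne_add_two hxv, ← hcard, Nat.card_coe_set_eq, Nat.card_coe_set_eq,
    edgeSet_sup, edgeSet_sup, edgeSet_edge_of_ne a.2.2.symm, edgeSet_edge_of_ne hxv,
    Set.union_singleton, Set.union_singleton, Set.ncard_insert_of_notMem,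
    Set.ncard_insert_of_notMem, ncard_edgeSet_map]
  · exact mk_notMem_edgeSet_map_subtype (Or.inr rfl)
  · rw [Set.mem_insert_iff, not_or, Sym2.eq_iff]
    exact ⟨by simp [hxv, a.2.1.symm], mk_notMem_edgeSet_map_subtype (Or.inl rfl)⟩

theorem IsTree.map_subdivide [Finite V] (hT' : T'.IsTree) (hxv : x ≠ v)
    {a b : {w : V // w ≠ x ∧ w ≠ v}} (hab : T'.Adj a b) :
    ((T'.map (Function.Embedding.subtype _)).deleteEdges {s(↑a, ↑b)} ⊔ edge v a ⊔ edge v b ⊔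
      edge x v).IsTree := by
  rw [isTree_iff_connected_and_card] at hT' ⊢
  obtain ⟨hconn, hcard⟩ := hT'
  set T₀ := T'.map (Function.Embedding.subtype fun w : V => w ≠ x ∧ w ≠ v)
  set T := T₀.deleteEdges {s(↑a, ↑b)} ⊔ edge v a ⊔ edge v b ⊔ edge x v
  have hva : T.Adj v a := Or.inl (Or.inl (Or.inr (by simp [edge_adj, a.2.2.symm])))
  have hvb : T.Adj v b := Or.inl (Or.inr (by simp [edge_adj, b.2.2.symm]))
  have hlift : ∀ ⦃p q⦄, T'.Adj p q → T.Reachable p q := fun p q h => by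
    by_cases hpq : s((p : V), q) = s(↑a, ↑b)
    · rcases Sym2.eq_iff.1 hpq with ⟨hp, hq⟩ | ⟨hp, hq⟩ <;> rw [hp, hq]
      · exact hva.reachable.symm.trans hvb.reachable
      · exact hvb.reachable.symm.trans hva.reachable
    · exact Adj.reachable (Or.inl (Or.inl (Or.inl
        (deleteEdges_adj.2 ⟨map_adj_apply.2 h, hpq⟩))))
  refine ⟨connected_of_reachable_subtype hconn.preconnected hlift a hva
    (Or.inr (by simp [edge_adj, hxv])), ?_⟩
  have hab₀ : s(↑a, ↑b) ∈ T₀.edgeSet := (map_adj _ _ _ _).2 ⟨a, b, hab, rfl, rfl⟩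
  have hpos : 0 < T'.edgeSet.ncard := (Set.ncard_pos).2 ⟨s(a, b), hab⟩
  rw [← natCard_subtype_ne_and_ne_add_two hxv, ← hcard, Nat.card_coe_set_eq, Nat.card_coe_set_eq,
    edgeSet_sup, edgeSet_sup, edgeSet_sup, edgeSet_deleteEdges, edgeSet_edge_of_ne a.2.2.symm,
    edgeSet_edge_of_ne b.2.2.symm, edgeSet_edge_of_ne hxv, Set.union_singleton, Set.union_singleton,
    Set.union_singleton, Set.ncard_insert_of_notMem, Set.ncard_insert_of_notMem,
    Set.ncard_insert_of_notMem, Set.ncard_sdiff_singleton_of_mem hab₀, ncard_edgeSet_map]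
  · omega
  · exact fun h => mk_notMem_edgeSet_map_subtype (Or.inr rfl) h.1
  · rw [Set.mem_insert_iff, not_or]
    exact ⟨fun h => hab.ne.symm (Subtype.ext (Sym2.congr_right.1 h)),
      fun h => mk_notMem_edgeSet_map_subtype (Or.inr rfl) h.1⟩
  · simp only [Set.mem_insert_iff, Sym2.eq_iff, not_or]
    exact ⟨by simp [hxv, b.2.1.symm], by simp [hxv, a.2.1.symm],
      fun h => mk_notMem_edgeSet_map_subtype (Or.inl rfl) h.1⟩

end Complement

end SimpleGraph

section Network

variable {V : Type*} {G : SimpleGraph V}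

lemma eq_or_eq_of_adj_of_deg_le_one [Finite V] (hG : G.Connected) {x v : V} (hxv : G.Adj x v)
    (hx : deg G x ≤ 1) (hv : deg G v ≤ 1) (w : V) : w = x ∨ w = v := by
  refine Reachable.mem_of_forall_adj_mem (s := {x, v}) (fun p q hpq hp => ?_)
    (hG.preconnected x w) (.inl rfl)
  rcases hp with rfl | rfl
  · exact .inr ((Set.ncard_le_one_iff).1 hx hpq hxv)
  · exact .inl ((Set.ncard_le_one_iff).1 hv hpq hxv.symm)

lemma exists_neighborSet_eq_of_deg_eq_three {v x : V} (hv : deg G v = 3) (hvx : G.Adj v x) :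
    ∃ a b, a ≠ x ∧ b ≠ x ∧ G.neighborSet v = {x, a, b} := by
  obtain ⟨p, q, r, hpq, hpr, hqr, hnbr⟩ := Set.ncard_eq_three.1 hv
  have hx : x ∈ G.neighborSet v := hvx
  rw [hnbr] at hx
  rcases hx with rfl | rfl | rfl
  · exact ⟨q, r, hpq.symm, hpr.symm, hnbr⟩
  · exact ⟨p, r, hpq, hqr.symm, hnbr.trans (Set.insert_comm _ _ _)⟩
  · refine ⟨p, q, hpr, hqr, hnbr.trans ?_⟩
    rw [Set.pair_comm q x, Set.insert_comm]

lemma suppressAdj_le_sup_edge {x v a b : V} (hv : G.neighborSet v = {x, a, b})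
    {p q : {w : V // w ≠ x ∧ w ≠ v}} (h : (suppressAdj G x v).Adj p q) :
    (G ⊔ edge a b).Adj p q := by
  obtain ⟨hpq, hG | ⟨hp, hq⟩⟩ := h
  · exact .inl hG
  have hp' : (p : V) ∈ ({x, a, b} : Set V) := hv ▸ hp
  have hq' : (q : V) ∈ ({x, a, b} : Set V) := hv ▸ hq
  refine .inr ((edge_adj _ _ _ _).2 ⟨?_, fun h => hpq (Subtype.ext h)⟩)
  rcases hp' with h | h | h <;> rcases hq' with h' | h' | h'
  all_goals first
    | exact absurd h p.2.1 | exact absurd h' q.2.1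
    | exact absurd (Subtype.ext (h.trans h'.symm)) hpq
    | exact .inl ⟨h, h'⟩ | exact .inr ⟨h, h'⟩

lemma isSupportTree_of_deg_map_le [Finite V] {X : Set V} {x v a : V}
    {T' : SimpleGraph {w : V // w ≠ x ∧ w ≠ v}} {T : SimpleGraph V}
    (hGX : {w | deg G w ≤ 1} = X) (hx : x ∈ X)
    (hT'X : {w | deg T' w ≤ 1} = {w : {w : V // w ≠ x ∧ w ≠ v} | ↑w ∈ X})
    (hT : T.IsTree) (hTG : T ≤ G)
    (hdeg : ∀ w, deg (T'.map (Function.Embedding.subtype _)) w ≤ deg T w)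
    (hvx : T.Adj v x) (hva : T.Adj v a) (hax : a ≠ x) : IsSupportTree G T X := by
  refine ⟨hTG, hT, Set.ext fun w => ⟨fun hw => ?_, fun hw => (deg_mono hTG w).trans (hGX.ge hw)⟩⟩
  by_contra hwX
  suffices 2 ≤ deg T w by simp only [Set.mem_ofPred_eq] at hw; omega
  by_cases hS : w ≠ x ∧ w ≠ v
  · have hT'w : ¬deg T' ⟨w, hS⟩ ≤ 1 := fun h => hwX (hT'X.le h)
    have := (deg_map _ T' ⟨w, hS⟩).ge.trans (hdeg w)
    omega
  · obtain rfl | rfl : w = x ∨ w = v := by tauto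
    · exact absurd hx hwX
    · exact two_le_deg hvx hva hax.symm

section SupportTree

variable [Finite V] {X : Set V} {x v : V} {T' : SimpleGraph {w : V // w ≠ x ∧ w ≠ v}}
  {a b : {w : V // w ≠ x ∧ w ≠ v}}

lemma isSupportTree_attach (hGX : {w | deg G w ≤ 1} = X) (hx : x ∈ X)
    (hT'X : {w | deg T' w ≤ 1} = {w : {w : V // w ≠ x ∧ w ≠ v} | ↑w ∈ X}) (hT' : T'.IsTree)
    (hxv : G.Adj x v) (hva : G.Adj v a) (hT'G : T'.map (Function.Embedding.subtype _) ≤ G) :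
    IsSupportTree G (T'.map (Function.Embedding.subtype _) ⊔ edge v a ⊔ edge x v) X :=
  isSupportTree_of_deg_map_le hGX hx hT'X (hT'.map_sup_edge_sup_edge hxv.ne a)
    (sup_le (sup_le hT'G ((edge_le_iff _).2 (.inr hva))) ((edge_le_iff _).2 (.inr hxv)))
    (deg_mono (le_sup_left.trans le_sup_left)) (.inr (by simp [edge_adj, hxv.ne']))
    (.inl (.inr (by simp [edge_adj, hva.ne]))) a.2.1

lemma isSupportTree_subdivide (hGX : {w | deg G w ≤ 1} = X) (hx : x ∈ X)
    (hT'X : {w | deg T' w ≤ 1} = {w : {w : V // w ≠ x ∧ w ≠ v} | ↑w ∈ X}) (hT' : T'.IsTree)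
    (hxv : G.Adj x v) (hva : G.Adj v a) (hvb : G.Adj v b) (hab : T'.Adj a b)
    (hT'G : T'.map (Function.Embedding.subtype _) ≤ G ⊔ edge a b) :
    IsSupportTree G ((T'.map (Function.Embedding.subtype _)).deleteEdges {s(↑a, ↑b)} ⊔
      edge v a ⊔ edge v b ⊔ edge x v) X := by
  have hv : ∀ q, ¬(T'.map (Function.Embedding.subtype _)).Adj v q :=
    fun _ h => (ne_and_ne_of_adj_map_subtype h).2 rfl
  refine isSupportTree_of_deg_map_le hGX hx hT'X (hT'.map_subdivide hxv.ne hab)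
    (sup_le (sup_le (sup_le ?_ ((edge_le_iff _).2 (.inr hva))) ((edge_le_iff _).2 (.inr hvb)))
      ((edge_le_iff _).2 (.inr hxv)))
    (fun w => (deg_le_deg_subdivide hv w).trans (deg_mono le_sup_left w))
    (.inr (by simp [edge_adj, hxv.ne'])) (.inl (.inl (.inr (by simp [edge_adj, hva.ne])))) a.2.1
  exact sdiff_le_iff.2 (hT'G.trans_eq (sup_comm _ _))

end SupportTree

end Network

theorem stmt3_general {V : Type*} [Fintype V] (G : SimpleGraph V) (X : Set V) (x v : V)
    (hN : IsNetwork G X) (hx : x ∈ X)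
    (hadj : G.Adj x v)
    (h : TreeBased (suppressAdj G x v) {w | (w : V) ∈ X}) :
    TreeBased G X := by
  obtain ⟨hconn, hdeg, hGX⟩ := hN
  obtain ⟨T', hT'le, hT', hT'X⟩ := h
  have hv : deg G v = 3 := by
    refine (hdeg v).resolve_left fun hv => ?_
    obtain ⟨⟨w, hw⟩⟩ := hT'.connected.nonempty
    have := eq_or_eq_of_adj_of_deg_le_one hconn hadj (hGX.ge hx) hv w
    tauto
  obtain ⟨a, b, hax, hbx, hnbr⟩ := exists_neighborSet_eq_of_deg_eq_three hv hadj.symm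
  have hva : G.Adj v a := hnbr.ge (by simp)
  have hvb : G.Adj v b := hnbr.ge (by simp)
  let a' : {w : V // w ≠ x ∧ w ≠ v} := ⟨a, hax, hva.ne'⟩
  let b' : {w : V // w ≠ x ∧ w ≠ v} := ⟨b, hbx, hvb.ne'⟩
  have hsup : T'.map (Function.Embedding.subtype _) ≤ G ⊔ edge a' b' := by
    intro _ _ h₀
    obtain ⟨p, q, hpq, rfl, rfl⟩ := (map_adj _ _ _ _).1 h₀
    exact suppressAdj_le_sup_edge hnbr (hT'le hpq)
  by_cases hG : T'.map (Function.Embedding.subtype _) ≤ G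
  · exact ⟨_, isSupportTree_attach (a := a') hGX hx hT'X hT' hadj hva hG⟩
  · have hab : T'.Adj a' b' := map_adj_apply.1 (adj_of_le_sup_edge_of_not_le hsup hG)
    exact ⟨_, isSupportTree_subdivide hGX hx hT'X hT' hadj hva hvb hab hsup⟩

/-- If `N − x` is tree-based then so is `N`. Here `v` is the (unique) neighbour
of the leaf `x`, and `N − x = suppressAdj G x v`. -/
theorem stmt3 {V : Type*} [Fintype V] (G : SimpleGraph V) (X : Set V) (x v : V)
    (hN : IsNetwork G X) (hX : 2 ≤ X.ncard) (hx : x ∈ X)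
    (hadj : G.Adj x v) (huniq : ∀ w, G.Adj x w → w = v)
    (h : TreeBased (suppressAdj G x v) {w | (w : V) ∈ X}) :
    TreeBased G X :=
  stmt3_general G X x v hN hx hadj h
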